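/- arXiv:2206.01941 — 3 statements merged into one kernel-verified Lean document; each statement's English description precedes it below -/
import Mathlib

section
/- Let p > 4 and let V satisfy (V). If u ∈ X is a nontrivial critical point of I (i.e., u ≠ 0 and I'(u)[v] = 0 for all v ∈ X), then I(u) ≥ (1/4)∫(|∇u|² + V(x)u²) dx > 0; in particular I(u) > 0. -/
noncomputable section

open MeasureTheory Real Filter Topology
open scoped NNReal ENNReal

abbrev R2 : Type := EuclideanSpace ℝ (Fin 2)

/-- An element of `H¹(ℝ²)`: a function together with its weak gradient. -/
structure H1 : Type where
  u : R2 → ℝ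
  grad : R2 → R2
  memL2 : MemLp u 2 (volume : Measure R2)
  grad_memL2 : MemLp grad 2 (volume : Measure R2)
  weak_grad : ∀ φ : R2 → ℝ, ContDiff ℝ (⊤ : ℕ∞) φ → HasCompactSupport φ →
    ∀ v : R2, ∫ x : R2, u x * fderiv ℝ φ x v = - ∫ x : R2, (inner ℝ (grad x) v : ℝ) * φ x

/-- Hypotheses (V) on the potential. -/
def condV (V : R2 → ℝ) : Prop :=
  LocallyIntegrable V (volume : Measure R2) ∧
  (∃ a : ℝ, 0 < a ∧ ∀ x : R2, a ≤ V x) ∧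
  (∀ M : ℝ, 0 < M → volume {x : R2 | V x ≤ M} < ⊤)

/-- Membership in the space `X`. -/
def MemX (V : R2 → ℝ) (w : H1) : Prop :=
  Integrable (fun x : R2 => V x * (w.u x) ^ 2) (volume : Measure R2) ∧
  Integrable (fun x : R2 => Real.log (1 + ‖x‖) * (w.u x) ^ 2) (volume : Measure R2)

def B1 (f g : R2 → ℝ) : ℝ := ∫ x : R2, ∫ y : R2, Real.log (1 + ‖x - y‖) * f x * g y
def B2 (f g : R2 → ℝ) : ℝ := ∫ x : R2, ∫ y : R2, Real.log (1 + 1 / ‖x - y‖) * f x * g y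
def B0 (f g : R2 → ℝ) : ℝ := B1 f g - B2 f g

/-- The energy functional `I`. -/
def energy (V : R2 → ℝ) (p : ℝ) (w : H1) : ℝ :=
  (1 / 2) * (∫ x : R2, (‖w.grad x‖ ^ 2 + V x * (w.u x) ^ 2)) +
  (1 / 4) * B0 (fun x => (w.u x) ^ 2) (fun x => (w.u x) ^ 2) -
  (1 / p) * ∫ x : R2, |w.u x| ^ p

/-- The derivative `I'(w)[v]`. -/
def energyDeriv (V : R2 → ℝ) (p : ℝ) (w v : H1) : ℝ :=
  (∫ x : R2, ((inner ℝ (w.grad x) (v.grad x) : ℝ) + V x * w.u x * v.u x)) +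
  B0 (fun x => (w.u x) ^ 2) (fun x => w.u x * v.u x) -
  ∫ x : R2, |w.u x| ^ (p - 2) * w.u x * v.u x

/-- Weak solution of (E). -/
def IsWeakSolution (V : R2 → ℝ) (p : ℝ) (w : H1) : Prop :=
  MemX V w ∧ ∀ v : H1, MemX V v → energyDeriv V p w v = 0

/-- Nontriviality: `u` is not a.e. zero. -/
def NontrivialH1 (w : H1) : Prop := ¬ (w.u =ᵐ[(volume : Measure R2)] 0)

/-- The `X`-norm. -/
def normX (V : R2 → ℝ) (w : H1) : ℝ :=
  Real.sqrt (∫ x : R2,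
    (‖w.grad x‖ ^ 2 + V x * (w.u x) ^ 2 + Real.log (1 + ‖x‖) * (w.u x) ^ 2))

/-- The `X`-norm of the difference of two elements. -/
def distX (V : R2 → ℝ) (w z : H1) : ℝ :=
  Real.sqrt (∫ x : R2,
    (‖w.grad x - z.grad x‖ ^ 2 + V x * (w.u x - z.u x) ^ 2 +
      Real.log (1 + ‖x‖) * (w.u x - z.u x) ^ 2))

/-- The `H¹`-norm. -/
def normH1 (w : H1) : ℝ := Real.sqrt (∫ x : R2, (‖w.grad x‖ ^ 2 + (w.u x) ^ 2))

/-- A Cerami sequence for `I` at level `c`. -/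
def CeramiSeq (V : R2 → ℝ) (p c : ℝ) (u : ℕ → H1) : Prop :=
  (∀ n, MemX V (u n)) ∧
  Tendsto (fun n => energy V p (u n)) atTop (nhds c) ∧
  Tendsto (fun n => (1 + normX V (u n)) *
    sSup {r : ℝ | ∃ v : H1, MemX V v ∧ normX V v ≤ 1 ∧ r = |energyDeriv V p (u n) v|})
    atTop (nhds 0)

/-- The ground state energy level: infimum of `I` over nontrivial weak solutions. -/
def groundStateLevel (V : R2 → ℝ) (p : ℝ) : ℝ :=
  sInf {c : ℝ | ∃ z : H1, NontrivialH1 z ∧ IsWeakSolution V p z ∧ c = energy V p z}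

/-- a nontrivial critical point of `I` has positive energy. -/
theorem statement4 (p : ℝ) (hp : 4 < p) (V : R2 → ℝ) (hV : condV V)
    (w : H1) (hX : MemX V w) (hnt : NontrivialH1 w)
    (hcrit : ∀ v : H1, MemX V v → energyDeriv V p w v = 0) :
    (1 / 4) * (∫ x : R2, (‖w.grad x‖ ^ 2 + V x * (w.u x) ^ 2)) ≤ energy V p w ∧
    0 < (1 / 4) * (∫ x : R2, (‖w.grad x‖ ^ 2 + V x * (w.u x) ^ 2)) := by
  have hp0 : (0:ℝ) < p := by linarith
  have hderiv := hcrit w hX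
  unfold energyDeriv at hderiv
  unfold energy
  have h1 : (∫ x : R2, ((inner ℝ (w.grad x) (w.grad x) : ℝ) + V x * w.u x * w.u x))
      = ∫ x : R2, (‖w.grad x‖ ^ 2 + V x * (w.u x) ^ 2) := by
    congr 1; funext x; rw [real_inner_self_eq_norm_sq]; ring
  have h2 : (fun x : R2 => w.u x * w.u x) = (fun x : R2 => (w.u x) ^ 2) := by
    funext x; ring
  have h3 : (∫ x : R2, |w.u x| ^ (p - 2) * w.u x * w.u x) = ∫ x : R2, |w.u x| ^ p := by
    congr 1; funext x
    by_cases h : w.u x = 0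
    · simp [h, Real.zero_rpow (ne_of_gt hp0),
        Real.zero_rpow (show p - 2 ≠ 0 by linarith)]
    · have habs : 0 < |w.u x| := abs_pos.mpr h
      have hsplit : |w.u x| ^ p = |w.u x| ^ (p - 2) * |w.u x| ^ (2:ℝ) := by
        rw [← Real.rpow_add habs]; ring_nf
      rw [hsplit, show ((2:ℝ) = ((2:ℕ):ℝ)) by norm_num, Real.rpow_natCast, sq_abs]
      ring
  rw [h1, h2, h3] at hderiv
  set A := ∫ x : R2, (‖w.grad x‖ ^ 2 + V x * (w.u x) ^ 2) with hAdef
  set B := B0 (fun x : R2 => (w.u x) ^ 2) (fun x : R2 => (w.u x) ^ 2) with hBdef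
  set C := ∫ x : R2, |w.u x| ^ p with hCdef
  have hC0 : 0 ≤ C := integral_nonneg fun x => Real.rpow_nonneg (abs_nonneg _) _
  have h14 : 1 / p ≤ 1 / 4 := by
    apply one_div_le_one_div_of_le <;> linarith
  have hfact : 0 ≤ (1/4 - 1/p) * C := mul_nonneg (by linarith) hC0
  constructor
  · linarith
  · obtain ⟨hVint, hlogint⟩ := hX
    obtain ⟨hVloc, ⟨a, ha, haV⟩, hVset⟩ := hV
    have husq : Integrable (fun x : R2 => (w.u x) ^ 2) volume := w.memL2.integrable_sq
    have hgint : Integrable (fun x : R2 => ‖w.grad x‖ ^ 2) volume :=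
      w.grad_memL2.norm.integrable_sq
    have hu2pos : 0 < ∫ x : R2, (w.u x) ^ 2 := by
      rcases lt_or_eq_of_le (integral_nonneg (f := fun x : R2 => (w.u x) ^ 2) fun x => sq_nonneg (w.u x)) with h | h
      · exact h
      · exfalso
        have hz := (integral_eq_zero_iff_of_nonneg
          (fun x => sq_nonneg (w.u x)) husq).mp h.symm
        apply hnt
        filter_upwards [hz] with x hx
        have hx2 : (w.u x) ^ 2 = 0 := hx
        have := pow_eq_zero_iff (n := 2) (two_ne_zero) |>.mp hx2
        simpa using this
    have hVleq : ∫ x : R2, a * (w.u x)^2 ≤ ∫ x : R2, V x * (w.u x)^2 := by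
      apply integral_mono (husq.const_mul a) hVint
      intro x
      exact mul_le_mul_of_nonneg_right (haV x) (sq_nonneg _)
    have hVpos : 0 < ∫ x : R2, V x * (w.u x)^2 := by
      have hml : ∫ x : R2, a * (w.u x)^2 = a * ∫ x : R2, (w.u x)^2 :=
        integral_const_mul a _
      nlinarith
    have hApos : 0 < A := by
      rw [hAdef, integral_add hgint hVint]
      have hg0 : 0 ≤ ∫ x : R2, ‖w.grad x‖^2 := integral_nonneg fun x => sq_nonneg _
      linarith
    linarith
end
end

section
/- Let u ∈ H¹(ℝ²) with ∫ log(1+|x|)u² dx < ∞, let x̄ ∈ ℝ², m > 0, and suppose ∫_{B₂(x̄)} u² dx ≥ m. Then for every R̄ > |x̄| + 2, V₁(u) := ∬ log(1+|x−y|) u²(x)u²(y) dxdy ≥ (m/2)·( ∫ log(1+|y|)u²(y) dy − log(1+2R̄)·∫ u² dy ). In particular, ∫ log(1+|y|)u²(y) dy ≤ (2/m)·V₁(u) + log(1+2R̄)·∫ u² dy. -/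
noncomputable section

open MeasureTheory Real Filter Topology
open scoped NNReal ENNReal

set_option maxHeartbeats 1000000 in
lemma aux15 (f : R2 → ℝ) (hf0 : ∀ x, 0 ≤ f x)
    (hfm : AEStronglyMeasurable f (volume : Measure R2))
    (hint : Integrable f (volume : Measure R2))
    (hlog : Integrable (fun x : R2 => Real.log (1 + ‖x‖) * f x) (volume : Measure R2))
    (xbar : R2) (m : ℝ) (hm : 0 < m)
    (hball : m ≤ ∫ x in Metric.ball xbar 2, f x)
    (Rbar : ℝ) (hR : ‖xbar‖ + 2 < Rbar) :
    (m / 2) * ((∫ y : R2, Real.log (1 + ‖y‖) * f y) -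
        Real.log (1 + 2 * Rbar) * ∫ y : R2, f y) ≤
      ∫ x : R2, ∫ y : R2, Real.log (1 + ‖x - y‖) * f x * f y := by
  have hR0 : (0:ℝ) < Rbar := by
    have := norm_nonneg xbar; linarith
  obtain ⟨L, hL⟩ : ∃ L : ℝ, L = ∫ y : R2, Real.log (1 + ‖y‖) * f y := ⟨_, rfl⟩
  obtain ⟨A, hA⟩ : ∃ A : ℝ, A = ∫ y : R2, f y := ⟨_, rfl⟩
  obtain ⟨J, hJ⟩ : ∃ J : R2 → ℝ, J = fun x => ∫ y : R2, Real.log (1 + ‖x - y‖) * f y := ⟨_, rfl⟩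
  rw [← hL, ← hA]
  have hK0 : ∀ x y : R2, 0 ≤ Real.log (1 + ‖x - y‖) := fun x y =>
    Real.log_nonneg (by linarith [norm_nonneg (x - y)])
  have hKle : ∀ x y : R2, Real.log (1 + ‖x - y‖) ≤ Real.log (1 + ‖x‖) + Real.log (1 + ‖y‖) := by
    intro x y
    have h1 : (1:ℝ) + ‖x - y‖ ≤ (1 + ‖x‖) * (1 + ‖y‖) := by
      have h2 := norm_sub_le x y
      nlinarith [norm_nonneg x, norm_nonneg y]
    calc Real.log (1 + ‖x - y‖) ≤ Real.log ((1 + ‖x‖) * (1 + ‖y‖)) :=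
          Real.log_le_log (by positivity) h1
      _ = _ := Real.log_mul (by positivity) (by positivity)
  -- inner integrability
  have hInner : ∀ x : R2, Integrable (fun y : R2 => Real.log (1 + ‖x - y‖) * f y)
      (volume : Measure R2) := by
    intro x
    have hcont : Continuous (fun y : R2 => Real.log (1 + ‖x - y‖)) := by
      apply Continuous.log
      · exact continuous_const.add (continuous_const.sub continuous_id).norm
      · intro y; positivity
    refine Integrable.mono' ((hlog.add (hint.const_mul (Real.log (1 + ‖x‖))))) 
      (hcont.aestronglyMeasurable.mul hfm) ?_
    filter_upwards with y
    have h1 := hKle x y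
    have h2 := hK0 x y
    have h3 := hf0 y
    have h4 : Real.log (1 + ‖y‖) ≥ 0 := Real.log_nonneg (by linarith [norm_nonneg y])
    simp only [Pi.add_apply]
    rw [Real.norm_eq_abs, abs_of_nonneg (by positivity)]
    nlinarith
  have hJ0 : ∀ x, 0 ≤ J x := fun x => by
    rw [hJ]
    exact integral_nonneg fun y => mul_nonneg (hK0 x y) (hf0 y)
  -- upper bound for J
  have hJub : ∀ x : R2, J x ≤ Real.log (1 + ‖x‖) * A + L := by
    intro x
    have h := integral_mono (hInner x)
      ((hint.const_mul (Real.log (1 + ‖x‖))).add hlog)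
      (fun y => by
        have h1 := hKle x y
        have h3 := hf0 y
        simp only [Pi.add_apply]
        nlinarith)
    simp only [Pi.add_apply] at h
    rw [integral_add (hint.const_mul _) hlog, integral_const_mul] at h
    rw [hJ, hA, hL]
    exact h
  -- measurability of J
  have hJm : AEStronglyMeasurable J (volume : Measure R2) := by
    have hKm : AEStronglyMeasurable (fun z : R2 × R2 => Real.log (1 + ‖z.1 - z.2‖) * f z.2)
        ((volume : Measure R2).prod (volume : Measure R2)) := by
      refine AEStronglyMeasurable.mul ?_ (hfm.comp_snd)
      apply Continuous.aestronglyMeasurable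
      apply Continuous.log
      · exact continuous_const.add (continuous_fst.sub continuous_snd).norm
      · intro z; positivity
    rw [hJ]
    exact hKm.integral_prod_right'
  -- integrability of g = f * J
  have hg : Integrable (fun x : R2 => f x * J x) (volume : Measure R2) := by
    refine Integrable.mono' ((hlog.const_mul A).add (hint.const_mul L)) (hfm.mul hJm) ?_
    filter_upwards with x
    have h1 := hJub x
    have h2 := hJ0 x
    have h3 := hf0 x
    have h4 : Real.log (1 + ‖x‖) ≥ 0 := Real.log_nonneg (by linarith [norm_nonneg x])
    simp only [Pi.add_apply]
    rw [Real.norm_eq_abs, abs_of_nonneg (by positivity)]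
    nlinarith
  -- rewrite double integral
  have hBg : (∫ x : R2, ∫ y : R2, Real.log (1 + ‖x - y‖) * f x * f y)
      = ∫ x : R2, f x * J x := by
    refine integral_congr_ae (Filter.Eventually.of_forall fun x => ?_)
    rw [hJ]
    simp only []
    rw [← integral_const_mul]
    congr 1; funext y; ring
  rw [hBg]
  -- key pointwise kernel bound
  have hkey : ∀ x y : R2, ‖x‖ ≤ Rbar →
      (1/2) * Real.log (1 + ‖y‖) - (1/2) * Real.log (1 + 2*Rbar) ≤ Real.log (1 + ‖x - y‖) := by
    intro x y hx
    by_cases hy : ‖y‖ ≤ 2 * Rbar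
    · have h1 : Real.log (1 + ‖y‖) ≤ Real.log (1 + 2*Rbar) :=
        Real.log_le_log (by positivity) (by linarith)
      have := hK0 x y; linarith
    · push_neg at hy
      have h2 : ‖y‖ / 2 ≤ ‖x - y‖ := by
        have h3 : ‖y‖ - ‖x‖ ≤ ‖y - x‖ := norm_sub_norm_le y x
        rw [norm_sub_rev y x] at h3
        linarith
      have hsq : Real.sqrt (1 + ‖y‖) ≤ 1 + ‖y‖/2 := by
        have h4 : Real.sqrt (1 + ‖y‖) ≤ Real.sqrt ((1 + ‖y‖/2)^2) :=
          Real.sqrt_le_sqrt (by nlinarith [norm_nonneg y])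
        rwa [Real.sqrt_sq (by positivity)] at h4
      have h5 : Real.log (Real.sqrt (1 + ‖y‖)) ≤ Real.log (1 + ‖x - y‖) :=
        Real.log_le_log (Real.sqrt_pos.mpr (by positivity)) (by linarith)
      rw [Real.log_sqrt (by positivity)] at h5
      have h6 : 0 ≤ Real.log (1 + 2*Rbar) := Real.log_nonneg (by linarith)
      linarith
  obtain ⟨C, hC⟩ : ∃ C : ℝ, C = L - Real.log (1 + 2*Rbar) * A := ⟨_, rfl⟩
  rw [show L - Real.log (1 + 2*Rbar) * A = C from hC.symm]
  -- lower bound for J on the ball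
  have hJlb : ∀ x : R2, x ∈ Metric.ball xbar 2 → C / 2 ≤ J x := by
    intro x hxball
    have hx : ‖x‖ ≤ Rbar := by
      have h1 : dist x xbar < 2 := Metric.mem_ball.mp hxball
      rw [dist_eq_norm] at h1
      have h2 : ‖x‖ ≤ ‖x - xbar‖ + ‖xbar‖ := by
        have := norm_add_le (x - xbar) xbar
        simpa using this
      linarith
    have hlhs : Integrable (fun y : R2 =>
        ((1/2) * Real.log (1 + ‖y‖) - (1/2) * Real.log (1 + 2*Rbar)) * f y)
        (volume : Measure R2) := by
      refine Integrable.congr ((hlog.const_mul (1/2)).sub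
        (hint.const_mul ((1/2) * Real.log (1 + 2*Rbar)))) ?_
      filter_upwards with y
      simp only [Pi.sub_apply]
      ring
    have h := integral_mono hlhs (hInner x)
      (fun y => mul_le_mul_of_nonneg_right (hkey x y hx) (hf0 y))
    have hsplit : (∫ y : R2, ((1/2) * Real.log (1 + ‖y‖) - (1/2) * Real.log (1 + 2*Rbar)) * f y)
        = (1/2) * L - (1/2) * Real.log (1 + 2*Rbar) * A := by
      rw [show (fun y : R2 => ((1/2) * Real.log (1 + ‖y‖) - (1/2) * Real.log (1 + 2*Rbar)) * f y)
          = fun y : R2 => (1/2) * (Real.log (1 + ‖y‖) * f y)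
            - ((1/2) * Real.log (1 + 2*Rbar)) * f y from funext fun y => by ring,
        integral_sub (hlog.const_mul _) (hint.const_mul _), integral_const_mul,
        integral_const_mul, ← hL, ← hA]
    rw [hsplit] at h
    rw [hJ]
    calc C / 2 = (1/2) * L - (1/2) * Real.log (1 + 2*Rbar) * A := by rw [hC]; ring
      _ ≤ _ := h
  by_cases hCpos : 0 < C
  · -- main case
    have hstep1 : ∫ x in Metric.ball xbar 2, f x * J x ≤ ∫ x : R2, f x * J x :=
      setIntegral_le_integral hg (Filter.Eventually.of_forall fun x =>
        mul_nonneg (hf0 x) (hJ0 x))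
    have hstep2 : ∫ x in Metric.ball xbar 2, (C/2) * f x ≤ ∫ x in Metric.ball xbar 2, f x * J x := by
      refine setIntegral_mono_on ((hint.const_mul (C/2)).integrableOn)
        (hg.integrableOn) measurableSet_ball ?_
      intro x hx
      have := hJlb x hx
      have h3 := hf0 x
      nlinarith
    have hstep3 : (m/2) * C ≤ ∫ x in Metric.ball xbar 2, (C/2) * f x := by
      rw [integral_const_mul]
      have : m ≤ ∫ x in Metric.ball xbar 2, f x := hball
      nlinarith
    calc (m/2) * C ≤ _ := hstep3
      _ ≤ _ := hstep2
      _ ≤ _ := hstep1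
  · push_neg at hCpos
    have h1 : 0 ≤ ∫ x : R2, f x * J x :=
      integral_nonneg fun x => mul_nonneg (hf0 x) (hJ0 x)
    nlinarith

/-- lower bound on `V₁(u)` in terms of the logarithmic weight, for functions
with mass `m` in a fixed ball. -/
theorem statement15 (w : H1)
    (hlog : Integrable (fun x : R2 => Real.log (1 + ‖x‖) * (w.u x) ^ 2) (volume : Measure R2))
    (xbar : R2) (m : ℝ) (hm : 0 < m)
    (hball : m ≤ ∫ x in Metric.ball xbar 2, (w.u x) ^ 2)
    (Rbar : ℝ) (hR : ‖xbar‖ + 2 < Rbar) :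
    (m / 2) * ((∫ y : R2, Real.log (1 + ‖y‖) * (w.u y) ^ 2) -
        Real.log (1 + 2 * Rbar) * ∫ y : R2, (w.u y) ^ 2) ≤
      B1 (fun x => (w.u x) ^ 2) (fun x => (w.u x) ^ 2) ∧
    (∫ y : R2, Real.log (1 + ‖y‖) * (w.u y) ^ 2) ≤
      (2 / m) * B1 (fun x => (w.u x) ^ 2) (fun x => (w.u x) ^ 2) +
        Real.log (1 + 2 * Rbar) * ∫ y : R2, (w.u y) ^ 2 := by
  have hu := w.memL2.aestronglyMeasurable
  have hfm : AEStronglyMeasurable (fun x : R2 => (w.u x) ^ 2) (volume : Measure R2) := by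
    have h := hu.mul hu
    refine h.congr (Filter.Eventually.of_forall fun x => ?_)
    simp only [Pi.mul_apply]
    ring
  have hint : Integrable (fun x : R2 => (w.u x) ^ 2) (volume : Measure R2) :=
    w.memL2.integrable_sq
  have hmain := aux15 (fun x => (w.u x) ^ 2) (fun x => sq_nonneg _) hfm hint hlog
    xbar m hm hball Rbar hR
  have hB1 : B1 (fun x => (w.u x) ^ 2) (fun x => (w.u x) ^ 2)
      = ∫ x : R2, ∫ y : R2, Real.log (1 + ‖x - y‖) * (w.u x) ^ 2 * (w.u y) ^ 2 := rfl
  rw [hB1]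
  refine ⟨hmain, ?_⟩
  have h2 : (0:ℝ) < 2 / m := by positivity
  have h3 := mul_le_mul_of_nonneg_left hmain (le_of_lt h2)
  have h4 : (2 / m) * ((m / 2) * ((∫ y : R2, Real.log (1 + ‖y‖) * (w.u y) ^ 2) -
      Real.log (1 + 2 * Rbar) * ∫ y : R2, (w.u y) ^ 2))
      = (∫ y : R2, Real.log (1 + ‖y‖) * (w.u y) ^ 2) -
        Real.log (1 + 2 * Rbar) * ∫ y : R2, (w.u y) ^ 2 := by
    field_simp
  rw [h4] at h3
  linarith
end
end

section
/- Let p > 4 and let V satisfy (V). Let ũ ∈ X be a nontrivial weak solution of (E) (that is, ũ ≠ 0 and I'(ũ)[v] = 0 for all v ∈ X). Then the function g(t) := I(tũ) on (0, +∞) has a unique critical point, located at t = 1, and this critical point is a global maximum: I(tũ) ≤ I(ũ) for all t ≥ 0, with I(tũ) < I(ũ) for t ≥ 0, t ≠ 1. -/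
noncomputable section

open MeasureTheory Real Filter Topology
open scoped NNReal ENNReal

/-- Scalar multiple of an element of `H¹`. -/
def H1.smul (t : ℝ) (w : H1) : H1 where
  u := fun x => t * w.u x
  grad := fun x => t • w.grad x
  memL2 := w.memL2.const_mul t
  grad_memL2 := w.grad_memL2.const_smul t
  weak_grad := by
    intro φ hφ hφc v
    have h := w.weak_grad φ hφ hφc v
    have h1 : (∫ x : R2, (t * w.u x) * fderiv ℝ φ x v) =
        t * ∫ x : R2, w.u x * fderiv ℝ φ x v := by
      rw [← MeasureTheory.integral_const_mul]
      congr 1; funext x; ring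
    have h2 : (∫ x : R2, (inner ℝ (t • w.grad x) v : ℝ) * φ x) =
        t * ∫ x : R2, (inner ℝ (w.grad x) v : ℝ) * φ x := by
      rw [← MeasureTheory.integral_const_mul]
      congr 1; funext x
      rw [real_inner_smul_left]; ring
    rw [h1, h2, h, mul_neg]

private lemma derivG (p A B C : ℝ) (hp : 4 < p) {t : ℝ} (ht : 0 < t) :
    deriv (fun s : ℝ => A/2*s^2 + B/4*s^4 - C/p*|s|^p) t
      = A*t + B*t^3 - C*t^(p-1) := by
  have hp0 : p ≠ 0 := by positivity
  have hEq : (fun s : ℝ => A/2*s^2 + B/4*s^4 - C/p*|s|^p)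
      =ᶠ[𝓝 t] fun s : ℝ => A/2*s^2 + B/4*s^4 - C/p*s^p := by
    filter_upwards [eventually_gt_nhds ht] with s hs
    rw [abs_of_pos hs]
  rw [hEq.deriv_eq]
  have h1 : HasDerivAt (fun s : ℝ => A/2*s^2 + B/4*s^4 - C/p*s^p)
      (A/2*((2:ℕ)*t^1) + B/4*((4:ℕ)*t^3) - C/p*(p*t^(p-1))) t :=
    (((hasDerivAt_pow 2 t).const_mul (A/2)).add
      ((hasDerivAt_pow 4 t).const_mul (B/4))).sub
      ((Real.hasDerivAt_rpow_const (Or.inl ht.ne')).const_mul (C/p))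
  rw [h1.deriv]
  push_cast
  field_simp

private lemma scalarMain (p A B C : ℝ) (hp : 4 < p) (hA : 0 < A) (hC : 0 ≤ C)
    (hABC : A + B = C) :
    (∀ t : ℝ, 0 < t →
      (deriv (fun s : ℝ => A/2*s^2 + B/4*s^4 - C/p*|s|^p) t = 0 ↔ t = 1)) ∧
    (∀ t : ℝ, 0 ≤ t → A/2*t^2 + B/4*t^4 - C/p*|t|^p ≤ A/2 + B/4 - C/p) ∧
    (∀ t : ℝ, 0 ≤ t → t ≠ 1 → A/2*t^2 + B/4*t^4 - C/p*|t|^p < A/2 + B/4 - C/p) := by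
  have hp0 : (0:ℝ) < p := by linarith
  set G : ℝ → ℝ := fun s => A/2*s^2 + B/4*s^4 - C/p*|s|^p with hGdef
  set f : ℝ → ℝ := fun t => A/t^2 + B - C*t^(p-4) with hfdef
  have hanti : StrictAntiOn f (Set.Ioi (0:ℝ)) := by
    intro s hs t ht hst
    simp only [hfdef]
    have hs0 : (0:ℝ) < s := Set.mem_Ioi.mp hs
    have h1 : A/t^2 < A/s^2 :=
      div_lt_div_of_pos_left hA (by positivity) (by nlinarith)
    have h2 : C*s^(p-4) ≤ C*t^(p-4) :=
      mul_le_mul_of_nonneg_left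
        (Real.rpow_le_rpow (le_of_lt hs) hst.le (by linarith)) hC
    linarith
  have hf1 : f 1 = 0 := by simp [hfdef]; linarith
  have hfpos : ∀ t ∈ Set.Ioo (0:ℝ) 1, 0 < f t := by
    intro t ht
    have := hanti (Set.mem_Ioi.mpr ht.1) (Set.mem_Ioi.mpr one_pos) ht.2
    rw [hf1] at this; linarith
  have hfneg : ∀ t ∈ Set.Ioi (1:ℝ), f t < 0 := by
    intro t ht
    have := hanti (Set.mem_Ioi.mpr one_pos) (Set.mem_Ioi.mpr (lt_trans one_pos ht)) ht
    rw [hf1] at this; linarith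
  have hderiv : ∀ t : ℝ, 0 < t → deriv G t = t^3 * f t := by
    intro t ht
    rw [hGdef, derivG p A B C hp ht, hfdef]
    have h3' : t^(3:ℕ) * t^(p-4) = t^(p-1) := by
      rw [← Real.rpow_natCast t 3, ← Real.rpow_add ht]
      congr 1
      push_cast; ring
    have h3 : (t:ℝ)^3 * (C * t^(p-4)) = C * t^(p-1) := by
      rw [← h3']; ring
    have h4 : t^3 * (A/t^2) = A * t := by field_simp
    calc A*t + B*t^3 - C*t^(p-1) = t^3*(A/t^2) + t^3*B - t^3*(C*t^(p-4)) := by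
          rw [h3, h4]; ring
    _ = t^3 * (A/t^2 + B - C*t^(p-4)) := by ring
  have hcont : Continuous G := by
    apply Continuous.sub
    · fun_prop
    · exact continuous_const.mul (continuous_abs.rpow_const (fun x => Or.inr hp0.le))
  have hmono : StrictMonoOn G (Set.Icc (0:ℝ) 1) := by
    apply strictMonoOn_of_deriv_pos (convex_Icc 0 1) hcont.continuousOn
    intro t ht
    rw [interior_Icc] at ht
    rw [hderiv t ht.1]
    exact mul_pos (pow_pos ht.1 3) (hfpos t ht)
  have hanti2 : StrictAntiOn G (Set.Ici (1:ℝ)) := by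
    apply strictAntiOn_of_deriv_neg (convex_Ici 1) hcont.continuousOn
    intro t ht
    rw [interior_Ici] at ht
    have ht0 : (0:ℝ) < t := lt_trans one_pos ht
    rw [hderiv t ht0]
    exact mul_neg_of_pos_of_neg (pow_pos ht0 3) (hfneg t ht)
  have hG1 : G 1 = A/2 + B/4 - C/p := by simp [hGdef]
  have key : ∀ t : ℝ, 0 ≤ t → t ≠ 1 → G t < G 1 := by
    intro t ht hne
    rcases lt_or_gt_of_ne hne with h | h
    · exact hmono (Set.mem_Icc.mpr ⟨ht, h.le⟩) (Set.mem_Icc.mpr ⟨zero_le_one, le_refl 1⟩) h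
    · exact hanti2 (Set.mem_Ici.mpr (le_refl 1)) (Set.mem_Ici.mpr h.le) h
  refine ⟨?_, ?_, ?_⟩
  · intro t ht
    constructor
    · intro h
      by_contra hne
      rw [hderiv t ht] at h
      rcases mul_eq_zero.mp h with h' | h'
      · exact absurd h' (pow_ne_zero 3 ht.ne')
      · rcases lt_or_gt_of_ne hne with hlt | hlt
        · exact absurd h' (ne_of_gt (hfpos t ⟨ht, hlt⟩))
        · exact absurd h' (ne_of_lt (hfneg t hlt))
    · rintro rfl
      rw [hderiv 1 one_pos, hf1]; ring
  · intro t ht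
    rcases eq_or_ne t 1 with rfl | hne
    · rw [← hG1]
    · rw [← hG1]; exact (key t ht hne).le
  · intro t ht hne
    rw [← hG1]; exact key t ht hne

/-- for a nontrivial weak solution `ũ`, the fibering map `t ↦ I(tũ)` has a
unique critical point on `(0,∞)`, located at `t = 1`, which is a global maximum. -/
theorem statement18 (p : ℝ) (hp : 4 < p) (V : R2 → ℝ) (hV : condV V)
    (w : H1) (hsol : IsWeakSolution V p w) (hnt : NontrivialH1 w) :
    (∀ t : ℝ, 0 < t →
      (deriv (fun s : ℝ => energy V p (H1.smul s w)) t = 0 ↔ t = 1)) ∧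
    (∀ t : ℝ, 0 ≤ t → energy V p (H1.smul t w) ≤ energy V p w) ∧
    (∀ t : ℝ, 0 ≤ t → t ≠ 1 → energy V p (H1.smul t w) < energy V p w) := by
  set A : ℝ := ∫ x : R2, (‖w.grad x‖ ^ 2 + V x * (w.u x) ^ 2) with hAdef
  set B : ℝ := B0 (fun x => (w.u x) ^ 2) (fun x => (w.u x) ^ 2) with hBdef
  set C : ℝ := ∫ x : R2, |w.u x| ^ p with hCdef
  have hp0 : (0:ℝ) < p := by linarith
  -- integrability facts
  have hu2 : Integrable (fun x : R2 => (w.u x) ^ 2) (volume : Measure R2) := by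
    have := w.memL2.integrable_norm_rpow (by norm_num) (by norm_num)
    simp only [ENNReal.toReal_ofNat] at this
    apply this.congr
    filter_upwards with x
    rw [Real.norm_eq_abs, Real.rpow_two, sq_abs]
  have hg2 : Integrable (fun x : R2 => ‖w.grad x‖ ^ 2) (volume : Measure R2) := by
    have := w.grad_memL2.integrable_norm_rpow (by norm_num) (by norm_num)
    simp only [ENNReal.toReal_ofNat] at this
    apply this.congr
    filter_upwards with x
    rw [Real.rpow_two]
  have hVu2 : Integrable (fun x : R2 => V x * (w.u x) ^ 2) (volume : Measure R2) :=
    hsol.1.1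
  -- A > 0
  have hu2pos : 0 < ∫ x : R2, (w.u x) ^ 2 := by
    rcases lt_or_eq_of_le (integral_nonneg (f := fun x => (w.u x) ^ 2) (fun x => sq_nonneg (w.u x))) with h | h
    · exact h
    · exfalso
      apply hnt
      have h0 : (fun x : R2 => (w.u x) ^ 2) =ᵐ[(volume : Measure R2)] 0 :=
        (integral_eq_zero_iff_of_nonneg (fun x => sq_nonneg (w.u x)) hu2).mp h.symm
      filter_upwards [h0] with x hx
      simpa [pow_eq_zero_iff] using hx
  obtain ⟨a, ha0, haV⟩ := hV.2.1
  have hA : 0 < A := by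
    rw [hAdef, integral_add hg2 hVu2]
    have h1 : 0 ≤ ∫ x : R2, ‖w.grad x‖ ^ 2 := integral_nonneg (fun x => sq_nonneg _)
    have h2 : a * ∫ x : R2, (w.u x) ^ 2 ≤ ∫ x : R2, V x * (w.u x) ^ 2 := by
      rw [← integral_const_mul]
      exact integral_mono (hu2.const_mul a) hVu2
        (fun x => mul_le_mul_of_nonneg_right (haV x) (sq_nonneg _))
    nlinarith
  have hC : 0 ≤ C := integral_nonneg (fun x => Real.rpow_nonneg (abs_nonneg _) p)
  -- A + B = C from the weak solution equation
  have hABC : A + B = C := by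
    have hd := hsol.2 w hsol.1
    unfold energyDeriv at hd
    have e1 : (∫ x : R2, ((inner ℝ (w.grad x) (w.grad x) : ℝ) + V x * w.u x * w.u x)) = A := by
      rw [hAdef]
      congr 1; funext x
      rw [real_inner_self_eq_norm_sq]; ring
    have e2 : (fun x : R2 => w.u x * w.u x) = (fun x : R2 => (w.u x) ^ 2) := by
      funext x; ring
    have e3 : (∫ x : R2, |w.u x| ^ (p - 2) * w.u x * w.u x) = C := by
      rw [hCdef]
      congr 1; funext x
      have : |w.u x| ^ p = |w.u x| ^ (p - 2) * |w.u x| ^ (2:ℝ) := by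
        rw [← Real.rpow_add' (abs_nonneg _) (by linarith)]
        norm_num
      rw [this, Real.rpow_two, sq_abs]
      ring
    rw [e1, e2, e3, ← hBdef] at hd
    linarith
  -- scaling identity
  have hscale : (fun s : ℝ => energy V p (H1.smul s w))
      = fun s : ℝ => A/2*s^2 + B/4*s^4 - C/p*|s|^p := by
    funext s
    have t1 : (∫ x : R2, (‖(H1.smul s w).grad x‖ ^ 2 + V x * ((H1.smul s w).u x) ^ 2))
        = s^2 * A := by
      rw [hAdef, ← integral_const_mul]
      congr 1; funext x
      show ‖s • w.grad x‖ ^ 2 + V x * (s * w.u x) ^ 2 = _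
      rw [norm_smul, Real.norm_eq_abs, mul_pow, sq_abs]
      ring
    have t2 : B0 (fun x => ((H1.smul s w).u x) ^ 2) (fun x => ((H1.smul s w).u x) ^ 2)
        = s^4 * B := by
      have sq1 : (fun x : R2 => ((H1.smul s w).u x) ^ 2)
          = fun x : R2 => (s * w.u x) ^ 2 := rfl
      rw [sq1, hBdef]
      unfold B0 B1 B2
      have l1 : (∫ x : R2, ∫ y : R2, Real.log (1 + ‖x - y‖) * (s * w.u x)^2 * (s * w.u y)^2)
          = s^4 * ∫ x : R2, ∫ y : R2, Real.log (1 + ‖x - y‖) * (w.u x)^2 * (w.u y)^2 := by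
        rw [← integral_const_mul]
        congr 1; funext x
        rw [← integral_const_mul]
        congr 1; funext y
        ring
      have l2 : (∫ x : R2, ∫ y : R2, Real.log (1 + 1/‖x - y‖) * (s * w.u x)^2 * (s * w.u y)^2)
          = s^4 * ∫ x : R2, ∫ y : R2, Real.log (1 + 1/‖x - y‖) * (w.u x)^2 * (w.u y)^2 := by
        rw [← integral_const_mul]
        congr 1; funext x
        rw [← integral_const_mul]
        congr 1; funext y
        ring
      rw [l1, l2]
      ring
    have t3 : (∫ x : R2, |(H1.smul s w).u x| ^ p) = |s|^p * C := by
      rw [hCdef, ← integral_const_mul]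
      congr 1; funext x
      show |s * w.u x| ^ p = _
      rw [abs_mul, Real.mul_rpow (abs_nonneg _) (abs_nonneg _)]
    unfold energy
    rw [t1, t2, t3]
    ring
  have hE1 : energy V p w = A/2 + B/4 - C/p := by
    unfold energy
    rw [← hAdef, ← hBdef, ← hCdef]
    ring
  obtain ⟨c1, c2, c3⟩ := scalarMain p A B C hp hA hC hABC
  rw [hscale, hE1]
  refine ⟨c1, fun t ht => ?_, fun t ht hne => ?_⟩
  · have h : energy V p (H1.smul t w) = A/2*t^2 + B/4*t^4 - C/p*|t|^p :=
      congrFun hscale t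
    rw [h]; exact c2 t ht
  · have h : energy V p (H1.smul t w) = A/2*t^2 + B/4*t^4 - C/p*|t|^p :=
      congrFun hscale t
    rw [h]; exact c3 t ht hne
end
end
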